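/- arXiv:math/0610421 — 5 statements merged into one kernel-verified Lean document; each statement's English description precedes it below -/
import Mathlib

section
/- Let K be a compact scattered topological space, and for each t ∈ K fix a compact open set V_t with V_t ∩ K^(α(t)) = {t}. Let B be a nonempty finite subset of K and let γ be the maximal ordinal such that B ∩ K^(γ) ≠ ∅. Then V_B ∩ K^(γ) = B ∩ K^(γ), and consequently V_B ∩ K^(γ+1) = ∅. -/
universe u

open Set

/-- Iterated derived sets: `K^(0) = K` and `K^(γ) = ⋂_{α<γ} (K^(α))'` for `γ > 0`. -/
noncomputable def iterDerived (K : Type u) [TopologicalSpace K] : Ordinal.{u} → Set K :=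
  fun γ =>
    if γ = 0 then Set.univ
    else ⋂ α : {α : Ordinal.{u} // α < γ}, derivedSet (iterDerived K α.1)
termination_by γ => γ
decreasing_by exact α.2

/-- A topological space is scattered if every nonempty closed subset has an isolated point. -/
def IsScattered (K : Type u) [TopologicalSpace K] : Prop :=
  ∀ C : Set K, IsClosed C → C.Nonempty → ∃ x ∈ C, x ∉ derivedSet C

theorem iterDerived_zero (K : Type u) [TopologicalSpace K] : iterDerived K 0 = univ := by
  rw [iterDerived, if_pos rfl]

theorem iterDerived_antitone (K : Type u) [TopologicalSpace K] : Antitone (iterDerived K) := by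
  intro δ γ h
  rcases eq_or_ne δ 0 with rfl | hδ
  · exact (iterDerived_zero K).symm ▸ subset_univ _
  · have hγ : γ ≠ 0 := fun h0 => hδ (le_antisymm (h0 ▸ h) zero_le)
    rw [iterDerived, iterDerived, if_neg hδ, if_neg hγ]
    exact fun x hx => mem_iInter.2 fun a => mem_iInter.1 hx ⟨a.1, a.2.trans_le h⟩

theorem biUnion_inter_eq_inter_of_inter_eq_singleton {X : Type*} {B E : Set X} {V D : X → Set X}
    (hV : ∀ t ∈ B, V t ∩ D t = {t}) (hE : ∀ t ∈ B, E ⊆ D t) :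
    (⋃ t ∈ B, V t) ∩ E = B ∩ E := by
  ext x
  simp only [mem_inter_iff, mem_iUnion, exists_prop]
  constructor
  · rintro ⟨⟨t, ht, hxt⟩, hxE⟩
    obtain rfl : x = t := (hV t ht).subset ⟨hxt, hE t ht hxE⟩
    exact ⟨ht, hxE⟩
  · rintro ⟨hxB, hxE⟩
    exact ⟨⟨x, hxB, ((hV x hxB).superset rfl).1⟩, hxE⟩

theorem stmt_0_general (K : Type u) [TopologicalSpace K]
    (α : K → Ordinal.{u})
    (hα : ∀ t, t ∈ iterDerived K (α t) ∧ t ∉ iterDerived K (α t + 1))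
    (V : K → Set K)
    (hV : ∀ t, V t ∩ iterDerived K (α t) = {t})
    (B : Finset K)
    (γ : Ordinal.{u})
    (hγmax : ∀ δ : Ordinal.{u}, ((B : Set K) ∩ iterDerived K δ).Nonempty → δ ≤ γ) :
    (⋃ t ∈ B, V t) ∩ iterDerived K γ = (B : Set K) ∩ iterDerived K γ ∧
    (⋃ t ∈ B, V t) ∩ iterDerived K (γ + 1) = ∅ := by
  have hle : ∀ t ∈ B, α t ≤ γ := fun t ht => hγmax _ ⟨t, ht, (hα t).1⟩
  have hsub : ∀ δ ≥ γ, ∀ t ∈ (B : Set K), iterDerived K δ ⊆ iterDerived K (α t) :=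
    fun δ hδ t ht => iterDerived_antitone K ((hle t ht).trans hδ)
  have hγ : (⋃ t ∈ B, V t) ∩ iterDerived K γ = (B : Set K) ∩ iterDerived K γ :=
    biUnion_inter_eq_inter_of_inter_eq_singleton (fun t _ => hV t) (hsub γ le_rfl)
  have hγsucc : (⋃ t ∈ B, V t) ∩ iterDerived K (γ + 1) = (B : Set K) ∩ iterDerived K (γ + 1) :=
    biUnion_inter_eq_inter_of_inter_eq_singleton (fun t _ => hV t) (hsub _ le_self_add)
  refine ⟨hγ, hγsucc.trans (not_nonempty_iff_eq_empty.1 fun h => ?_)⟩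
  exact (lt_add_one γ).not_ge (hγmax _ h)

theorem stmt_0 (K : Type u) [TopologicalSpace K] [CompactSpace K]
    (hscat : IsScattered K)
    (α : K → Ordinal.{u})
    (hα : ∀ t, t ∈ iterDerived K (α t) ∧ t ∉ iterDerived K (α t + 1))
    (V : K → Set K)
    (hVcomp : ∀ t, IsCompact (V t)) (hVopen : ∀ t, IsOpen (V t))
    (hV : ∀ t, V t ∩ iterDerived K (α t) = {t})
    (B : Finset K) (hB : B.Nonempty)
    (γ : Ordinal.{u})
    (hγmem : ((B : Set K) ∩ iterDerived K γ).Nonempty)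
    (hγmax : ∀ δ : Ordinal.{u}, ((B : Set K) ∩ iterDerived K δ).Nonempty → δ ≤ γ) :
    (⋃ t ∈ B, V t) ∩ iterDerived K γ = (B : Set K) ∩ iterDerived K γ ∧
    (⋃ t ∈ B, V t) ∩ iterDerived K (γ + 1) = ∅ :=
  stmt_0_general K α hα V hV B γ hγmax
end

section
/- Let K be a compact Hausdorff space, let m be a natural number or ∞, and let θ : ℝ → ℝ be of class C^m. Then the mapping Θ : C(K) → C(K) given by Θ(f) = θ ∘ f is of class C^m. -/
/-!
If `θ` is `C¹`, then `Θ f = θ ∘ f` is Fréchet differentiable with `DΘ(f) h = (θ' ∘ f) * h`: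
by the mean value inequality, the remainder at `t` is at most `‖h‖` times the oscillation of `θ'`
on the ball of radius `‖h‖` around `f t`, which is uniformly small because `θ'` is uniformly
continuous near the compact range of `f`. Hence `DΘ` is the composition of the Nemytskii operator
of `θ'` with the bounded linear map `g ↦ (h ↦ g * h)`, and induction on the order gives `C^n`.
-/

open Metric Set

theorem abs_sub_sub_mul_le_of_hasDerivAt {θ θ' : ℝ → ℝ} (hd : ∀ x, HasDerivAt θ (θ' x) x)
    {a y c : ℝ} (hc : ∀ x, |x - a| ≤ |y| → |θ' x - θ' a| ≤ c) :
    |θ (a + y) - θ a - θ' a * y| ≤ c * |y| := by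
  have hderiv : ∀ x ∈ closedBall a |y|,
      HasDerivWithinAt (fun x => θ x - θ' a * x) (θ' x - θ' a) (closedBall a |y|) x := fun x _ =>
    ((hd x).sub (((hasDerivAt_id x).const_mul (θ' a)).congr_deriv (mul_one _))).hasDerivWithinAt
  have hbound : ∀ x ∈ closedBall a |y|, ‖θ' x - θ' a‖ ≤ c := fun x hx =>
    hc x (by rwa [mem_closedBall, Real.dist_eq] at hx)
  have hy : a + y ∈ closedBall a |y| := by simp
  have := (convex_closedBall a |y|).norm_image_sub_le_of_norm_hasDerivWithin_le hderiv hbound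
    (mem_closedBall_self (abs_nonneg y)) hy
  simp only [Real.norm_eq_abs, add_sub_cancel_left] at this
  calc |θ (a + y) - θ a - θ' a * y|
      = |θ (a + y) - θ' a * (a + y) - (θ a - θ' a * a)| := by ring_nf
    _ ≤ c * |y| := this

section

variable {K : Type*} [TopologicalSpace K] [CompactSpace K]

theorem Continuous.exists_pos_dist_lt_near_range
    {g : ℝ → ℝ} (hg : Continuous g) (f : C(K, ℝ)) {c : ℝ} (hc : 0 < c) :
    ∃ δ > 0, ∀ t x, dist x (f t) < δ → dist (g x) (g (f t)) < c := by
  have := (isCompact_range f.continuous).uniformContinuousAt_of_continuousAt g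
    (fun a _ => hg.continuousAt) (dist_mem_uniformity hc)
  obtain ⟨δ, hδ, hnear⟩ := mem_uniformity_dist.1 this
  exact ⟨δ, hδ, fun t x hx => dist_comm (g x) _ ▸ hnear (dist_comm x _ ▸ hx) (mem_range_self t)⟩

theorem hasFDerivAt_postcomp {θ θ' : ℝ → ℝ} (hd : ∀ x, HasDerivAt θ (θ' x) x)
    (hc : Continuous θ') {Θ : C(K, ℝ) → C(K, ℝ)} (hΘ : ∀ f t, Θ f t = θ (f t)) (f : C(K, ℝ)) :
    HasFDerivAt Θ (ContinuousLinearMap.mul ℝ C(K, ℝ) ((ContinuousMap.mk θ' hc).comp f)) f := by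
  rw [hasFDerivAt_iff_isLittleO_nhds_zero, Asymptotics.isLittleO_iff]
  intro c hc0
  obtain ⟨δ, hδ, hθ'⟩ := hc.exists_pos_dist_lt_near_range f hc0
  filter_upwards [ball_mem_nhds 0 hδ] with h hh
  rw [mem_ball_zero_iff] at hh
  refine (ContinuousMap.norm_le _ (by positivity)).2 fun t => ?_
  have hht : |h t| ≤ ‖h‖ := h.norm_coe_le_norm t
  have hosc : ∀ x, |x - f t| ≤ |h t| → |θ' x - θ' (f t)| ≤ c := fun x hx =>
    (hθ' t x (by rw [Real.dist_eq]; linarith)).le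
  calc ‖(Θ (f + h) - Θ f - ContinuousLinearMap.mul ℝ C(K, ℝ) ((ContinuousMap.mk θ' hc).comp f) h) t‖
      = |θ (f t + h t) - θ (f t) - θ' (f t) * h t| := by simp [hΘ]
    _ ≤ c * |h t| := abs_sub_sub_mul_le_of_hasDerivAt hd hosc
    _ ≤ c * ‖h‖ := by gcongr

theorem ContDiff.postcomp_of_nat {n : ℕ} {θ : ℝ → ℝ} (hθ : ContDiff ℝ n θ)
    {Θ : C(K, ℝ) → C(K, ℝ)} (hΘ : ∀ f t, Θ f t = θ (f t)) : ContDiff ℝ n Θ := by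
  induction n generalizing θ Θ with
  | zero =>
    have hΘ_eq : Θ = (ContinuousMap.mk θ hθ.continuous).comp := by
      funext f; ext t; exact hΘ f t
    rw [Nat.cast_zero, contDiff_zero, hΘ_eq]
    exact ContinuousMap.continuous_postcomp _
  | succ n ih =>
    rw [Nat.cast_succ] at hθ ⊢
    obtain ⟨hdiff, -, hθ'⟩ := contDiff_succ_iff_deriv.mp hθ
    have hmul : ContDiff ℝ n (ContinuousLinearMap.mul ℝ C(K, ℝ)) :=
      ContinuousLinearMap.contDiff (E := C(K, ℝ)) (F := C(K, ℝ) →L[ℝ] C(K, ℝ)) _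
    exact contDiff_succ_iff_hasFDerivAt.2
      ⟨_, hmul.comp (ih hθ' (Θ := (ContinuousMap.mk _ hθ'.continuous).comp) fun _ _ => rfl),
        hasFDerivAt_postcomp (fun x => (hdiff x).hasDerivAt) hθ'.continuous hΘ⟩

end

theorem stmt_3_general (K : Type*) [TopologicalSpace K] [CompactSpace K]
    (m : ℕ∞) (θ : ℝ → ℝ) (hθ : ContDiff ℝ (m : WithTop ℕ∞) θ)
    (Θ : C(K, ℝ) → C(K, ℝ)) (hΘ : ∀ f : C(K, ℝ), ∀ t : K, Θ f t = θ (f t)) :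
    ContDiff ℝ (m : WithTop ℕ∞) Θ :=
  contDiff_iff_forall_nat_le.2 fun _ hk => (hθ.of_le (by exact_mod_cast hk)).postcomp_of_nat hΘ

theorem stmt_3 (K : Type*) [TopologicalSpace K] [CompactSpace K] [T2Space K]
    (m : ℕ∞) (θ : ℝ → ℝ) (hθ : ContDiff ℝ (m : WithTop ℕ∞) θ)
    (Θ : C(K, ℝ) → C(K, ℝ)) (hΘ : ∀ f : C(K, ℝ), ∀ t : K, Θ f t = θ (f t)) :
    ContDiff ℝ (m : WithTop ℕ∞) Θ :=
  stmt_3_general K m θ hθ Θ hΘ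
end

section
/- Let X be a real Banach space, let m be a natural number or ∞, and suppose there exists a function a : X → ℝ of class C^m with a(0) = 1 and a(x) = 0 whenever ‖x‖ ≥ 1. Then there exist a real number R > 1 and a function β : X → [0,1] of class C^m such that β(x) = 1 whenever ‖x‖ ≤ 1 and β(x) = 0 whenever ‖x‖ ≥ R. -/
/-! Since `a` is continuous with `a 0 = 1`, there is `0 < c < 1` with `a (c • x) > 1/2` on the
closed unit ball, while `a (c • x) = 0` once `‖x‖ ≥ c⁻¹`. Composing with a smooth transition
function `ψ` (`0` on `(-∞, 0]`, `1` on `[1, ∞)`), `β x = ψ (2 a (c • x))` works with `R = c⁻¹`. -/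

open Real

lemma exists_pos_lt_one_forall_norm_le_one_lt_apply_smul {X : Type*} [NormedAddCommGroup X]
    [NormedSpace ℝ X] {a : X → ℝ} (ha : ContinuousAt a 0) {r : ℝ} (hr : r < a 0) :
    ∃ c : ℝ, 0 < c ∧ c < 1 ∧ ∀ x : X, ‖x‖ ≤ 1 → r < a (c • x) := by
  obtain ⟨δ, hδ, hball⟩ := Metric.eventually_nhds_iff.1 (ha.eventually (lt_mem_nhds hr))
  refine ⟨min δ 1 / 2, by positivity, by linarith [min_le_right δ 1], fun x hx => hball ?_⟩
  calc dist ((min δ 1 / 2) • x) 0 = min δ 1 / 2 * ‖x‖ := by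
        rw [dist_zero_right, norm_smul, norm_of_nonneg (by positivity)]
    _ ≤ min δ 1 / 2 := mul_le_of_le_one_right (by positivity) hx
    _ < δ := by linarith [min_le_left δ 1, lt_min hδ one_pos]

theorem stmt_6_general (X : Type*) [NormedAddCommGroup X] [NormedSpace ℝ X]
    (m : ℕ∞) (a : X → ℝ) (ha : ContDiff ℝ (m : WithTop ℕ∞) a)
    (ha0 : a 0 = 1) (ha1 : ∀ x : X, 1 ≤ ‖x‖ → a x = 0) :
    ∃ R : ℝ, 1 < R ∧ ∃ β : X → ℝ, ContDiff ℝ (m : WithTop ℕ∞) β ∧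
      (∀ x, β x ∈ Set.Icc (0 : ℝ) 1) ∧
      (∀ x : X, ‖x‖ ≤ 1 → β x = 1) ∧
      (∀ x : X, R ≤ ‖x‖ → β x = 0) := by
  obtain ⟨c, hc0, hc1, hc⟩ := exists_pos_lt_one_forall_norm_le_one_lt_apply_smul
    ha.continuous.continuousAt (r := 1 / 2) (by rw [ha0]; norm_num)
  refine ⟨c⁻¹, one_lt_inv_iff₀.2 ⟨hc0, hc1⟩, fun x => smoothTransition (2 * a (c • x)),
    smoothTransition.contDiff.comp (contDiff_const.mul (ha.comp (contDiff_const_smul c))),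
    fun x => ⟨smoothTransition.nonneg _, smoothTransition.le_one _⟩,
    fun x hx => smoothTransition.one_of_one_le (by linarith [hc x hx]), fun x hx => ?_⟩
  have hcx : 1 ≤ ‖c • x‖ := by
    rw [norm_smul, norm_of_nonneg hc0.le]
    exact (inv_le_iff_one_le_mul₀' hc0).1 hx
  show smoothTransition (2 * a (c • x)) = 0
  rw [ha1 _ hcx, mul_zero]
  exact smoothTransition.zero_of_nonpos le_rfl

theorem stmt_6 (X : Type*) [NormedAddCommGroup X] [NormedSpace ℝ X] [CompleteSpace X]
    (m : ℕ∞) (a : X → ℝ) (ha : ContDiff ℝ (m : WithTop ℕ∞) a)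
    (ha0 : a 0 = 1) (ha1 : ∀ x : X, 1 ≤ ‖x‖ → a x = 0) :
    ∃ R : ℝ, 1 < R ∧ ∃ β : X → ℝ, ContDiff ℝ (m : WithTop ℕ∞) β ∧
      (∀ x, β x ∈ Set.Icc (0 : ℝ) 1) ∧
      (∀ x : X, ‖x‖ ≤ 1 → β x = 1) ∧
      (∀ x : X, R ≤ ‖x‖ → β x = 0) :=
  stmt_6_general X m a ha ha0 ha1
end

section
/- Let K be a set, for each t ∈ K let φ_t be an Orlicz function such that the function x ↦ φ_t(|x|) is of class C^∞ on ℝ, and suppose there exist positive reals R < S with φ_t(R) = 0 and φ_t(S) ≥ 1 for all t ∈ K. Let X be a linear subspace of ℓ^∞(K) and suppose that, whenever f ∈ X and ‖f‖_φ = 1, there exist δ > 0 and a finite subset F of K such that φ_t(|g(t)|) = 0 whenever g ∈ X, ‖f − g‖∞ < δ and t ∉ F. Then the generalized Orlicz norm ‖·‖_φ is of class C^∞ on X \ {0}. -/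
open scoped ENNReal

/-- An Orlicz function: a convex function `φ : [0,∞) → [0,∞)` with `φ 0 = 0` and
`φ x → ∞` as `x → ∞`. -/
def IsOrliczFunction (φ : ℝ → ℝ) : Prop :=
  ConvexOn ℝ (Set.Ici 0) φ ∧ φ 0 = 0 ∧ (∀ x ∈ Set.Ici (0 : ℝ), 0 ≤ φ x) ∧
    Filter.Tendsto φ Filter.atTop Filter.atTop

/-- The set of `ρ > 0` with `∑_{t∈K} φ_t(|f t|/ρ) ≤ 1`; the generalized Orlicz norm of `f`
is the infimum of this set. -/
def orliczSet {K : Type*} (φ : K → ℝ → ℝ) (f : K → ℝ) : Set ℝ :=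
  {ρ : ℝ | 0 < ρ ∧ ∑' t, ENNReal.ofReal (φ t (|f t| / ρ)) ≤ 1}

/-!
An Orlicz function is sub-homogeneous, `φ (a * x) ≤ a * φ x` for `a ∈ [0, 1]`, so the finite
modular `Ψ (g, ρ) = ∑_{t ∈ F} φ_t (|g t| / ρ)` satisfies `Ψ (g, σ) ≤ (ρ / σ) Ψ (g, ρ)` for
`ρ ≤ σ`. Near `f₀ ≠ 0` in `X` with norm `c`, the locality hypothesis at `f₀ / c` lets only the
coordinates in a finite set `F` contribute, so the norm of `g ∈ X` near `f₀` is the least `ρ`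
with `Ψ (g, ρ) ≤ 1`. Now `Ψ` is smooth where `ρ ≠ 0`, `Ψ (f₀, c) = 1`, and sub-homogeneity
gives `∂Ψ/∂ρ (f₀, c) ≤ -1 / c`. The implicit function theorem yields a smooth `σ` with
`Ψ (g, σ g) = 1`, and sub-homogeneity once more shows that `σ g` is the norm of `g`.
-/

open Filter Topology Set
open scoped Pointwise

lemma ContinuousLinearMap.isInvertible_of_apply_one_ne_zero {𝕜 : Type*}
    [NontriviallyNormedField 𝕜] (L : 𝕜 →L[𝕜] 𝕜) (h : L 1 ≠ 0) : L.IsInvertible :=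
  .of_inverse (g := (L 1)⁻¹ • .id 𝕜 𝕜) (by ext; simp [h]) (by ext; simp [h])

namespace IsOrliczFunction

variable {ψ : ℝ → ℝ}

lemma nonneg (h : IsOrliczFunction ψ) {x : ℝ} (hx : 0 ≤ x) : 0 ≤ ψ x :=
  h.2.2.1 x hx

lemma map_mul_le (h : IsOrliczFunction ψ) {a x : ℝ} (ha₀ : 0 ≤ a) (ha₁ : a ≤ 1)
    (hx : 0 ≤ x) : ψ (a * x) ≤ a * ψ x := by
  have := h.1.2 (mem_Ici.mpr le_rfl) (mem_Ici.mpr hx) (sub_nonneg.mpr ha₁) ha₀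
    (sub_add_cancel 1 a)
  simpa [h.2.1] using this

lemma monotoneOn (h : IsOrliczFunction ψ) : MonotoneOn ψ (Ici 0) := by
  intro x hx y _ hxy
  rw [mem_Ici] at hx
  rcases (hx.trans hxy).eq_or_lt with rfl | hy
  · rw [le_antisymm hxy hx]
  calc ψ x = ψ (x / y * y) := by rw [div_mul_cancel₀ x hy.ne']
    _ ≤ x / y * ψ y := h.map_mul_le (by positivity) (div_le_one_of_le₀ hxy hy.le) hy.le
    _ ≤ ψ y := mul_le_of_le_one_left (h.nonneg hy.le) (div_le_one_of_le₀ hxy hy.le)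

lemma eq_zero_of_le {R x : ℝ} (h : IsOrliczFunction ψ) (hR : 0 < R) (hψR : ψ R = 0)
    (hx : 0 ≤ x) (hxR : x ≤ R) : ψ x = 0 := by
  refine le_antisymm ?_ (h.nonneg hx)
  calc ψ x = ψ (x / R * R) := by rw [div_mul_cancel₀ x hR.ne']
    _ ≤ x / R * ψ R := h.map_mul_le (by positivity) (div_le_one_of_le₀ hxR hR.le) hR.le
    _ = 0 := by rw [hψR, mul_zero]

lemma one_lt_of_lt {S x : ℝ} (h : IsOrliczFunction ψ) (hS : 0 < S) (hψS : 1 ≤ ψ S)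
    (hSx : S < x) : 1 < ψ x := by
  have hx : 0 < x := hS.trans hSx
  have : ψ S ≤ S / x * ψ x := by
    simpa [div_mul_cancel₀ S hx.ne'] using
      h.map_mul_le (a := S / x) (by positivity) (div_le_one_of_le₀ hSx.le hx.le) hx.le
  rw [div_mul_eq_mul_div, le_div_iff₀ hx] at this
  nlinarith

end IsOrliczFunction

local notation "ℓ∞(" K ")" => lp (fun _ : K => ℝ) ∞

section

variable {K : Type*} {φ : K → ℝ → ℝ}

lemma mem_orliczSet_of_mem_of_le (hφ : ∀ t, IsOrliczFunction (φ t)) {f : K → ℝ} {ρ ρ' : ℝ}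
    (hρ : ρ ∈ orliczSet φ f) (hρρ' : ρ ≤ ρ') : ρ' ∈ orliczSet φ f := by
  obtain ⟨hρ₀, hsum⟩ := hρ
  refine ⟨hρ₀.trans_le hρρ', le_trans (ENNReal.tsum_le_tsum fun t => ?_) hsum⟩
  refine ENNReal.ofReal_le_ofReal ((hφ t).monotoneOn (mem_Ici.mpr ?_) (mem_Ici.mpr ?_) ?_)
  · exact div_nonneg (abs_nonneg _) (hρ₀.le.trans hρρ')
  · exact div_nonneg (abs_nonneg _) hρ₀.le
  · exact div_le_div_of_nonneg_left (abs_nonneg _) hρ₀ hρρ'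

lemma mem_orliczSet_of_abs_le {R : ℝ} (hφ : ∀ t, IsOrliczFunction (φ t)) (hR : 0 < R)
    (hφR : ∀ t, φ t R = 0) {f : K → ℝ} {ρ : ℝ} (hρ : 0 < ρ) (hf : ∀ t, |f t| ≤ R * ρ) :
    ρ ∈ orliczSet φ f := by
  refine ⟨hρ, ?_⟩
  have hzero : ∀ t, φ t (|f t| / ρ) = 0 := fun t =>
    (hφ t).eq_zero_of_le hR (hφR t) (by positivity) (div_le_of_le_mul₀ hρ.le hR.le (hf t))
  simp [hzero]

lemma abs_le_mul_of_mem_orliczSet {S : ℝ} (hφ : ∀ t, IsOrliczFunction (φ t)) (hS : 0 < S)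
    (hφS : ∀ t, 1 ≤ φ t S) {f : K → ℝ} {ρ : ℝ} (hρ : ρ ∈ orliczSet φ f) (t : K) :
    |f t| ≤ S * ρ := by
  obtain ⟨hρ₀, hsum⟩ := hρ
  by_contra! hlt
  have hS_lt : S < |f t| / ρ := by rwa [lt_div_iff₀ hρ₀]
  have hterm : 1 < ENNReal.ofReal (φ t (|f t| / ρ)) :=
    ENNReal.one_lt_ofReal.mpr ((hφ t).one_lt_of_lt hS (hφS t) hS_lt)
  exact (hterm.trans_le (ENNReal.le_tsum t)).not_ge hsum

lemma orliczSet_smul (f : K → ℝ) {c : ℝ} (hc : 0 < c) :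
    orliczSet φ (c • f) = c • orliczSet φ f := by
  ext ρ
  rw [mem_smul_set_iff_inv_smul_mem₀ hc.ne', smul_eq_mul]
  have hdiv : ∀ t, |(c • f) t| / ρ = |f t| / (c⁻¹ * ρ) := fun t => by
    rw [Pi.smul_apply, smul_eq_mul, abs_mul, abs_of_pos hc]
    field_simp
  simp only [orliczSet, mem_ofPred_eq, hdiv, inv_pos.mpr hc, mul_pos_iff_of_pos_left]

lemma orliczSet_nonempty {R : ℝ} (hφ : ∀ t, IsOrliczFunction (φ t)) (hR : 0 < R)
    (hφR : ∀ t, φ t R = 0) (f : ℓ∞(K)) : (orliczSet φ (fun t => f t)).Nonempty := by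
  refine ⟨(‖f‖ + 1) / R, mem_orliczSet_of_abs_le hφ hR hφR (by positivity) fun t => ?_⟩
  rw [mul_div_cancel₀ _ hR.ne', ← Real.norm_eq_abs]
  linarith [lp.norm_apply_le_norm ENNReal.top_ne_zero f t]

lemma sInf_orliczSet_smul (f : ℓ∞(K)) {c : ℝ} (hc : 0 < c) :
    sInf (orliczSet φ (fun t => (c • f) t)) = c * sInf (orliczSet φ (fun t => f t)) := by
  rw [lp.coeFn_smul, orliczSet_smul _ hc, Real.sInf_smul_of_nonneg hc.le, smul_eq_mul]

lemma sInf_orliczSet_pos {R S : ℝ} (hφ : ∀ t, IsOrliczFunction (φ t)) (hR : 0 < R)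
    (hφR : ∀ t, φ t R = 0) (hS : 0 < S) (hφS : ∀ t, 1 ≤ φ t S) {f : ℓ∞(K)} (hf : f ≠ 0) :
    0 < sInf (orliczSet φ (fun t => f t)) := by
  obtain ⟨t, ht⟩ : ∃ t, f t ≠ 0 := by
    by_contra! h
    exact hf (lp.ext (funext h))
  calc 0 < |f t| / S := by positivity
    _ ≤ _ := le_csInf (orliczSet_nonempty hφ hR hφR f) fun ρ hρ =>
      div_le_of_le_mul₀ hS.le hρ.1.le
        ((abs_le_mul_of_mem_orliczSet hφ hS hφS hρ t).trans_eq (mul_comm S ρ))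

/-- Written with `|g t / ρ|` rather than `|g t| / ρ`, so that its smoothness comes straight from
that of `x ↦ φ t |x|`. -/
noncomputable def finiteModular (φ : K → ℝ → ℝ) (F : Finset K) (p : ℓ∞(K) × ℝ) : ℝ :=
  ∑ t ∈ F, φ t |p.1 t / p.2|

lemma contDiffAt_finiteModular {n : WithTop ℕ∞}
    (hsmooth : ∀ t, ContDiff ℝ n (fun x : ℝ => φ t |x|)) (F : Finset K) {p : ℓ∞(K) × ℝ}
    (hp : p.2 ≠ 0) : ContDiffAt ℝ n (finiteModular φ F) p :=
  ContDiffAt.sum fun t _ => (hsmooth t).contDiffAt.comp p <|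
    ((lp.evalCLM ℝ (fun _ : K => ℝ) ∞ t).contDiff.comp contDiff_fst).contDiffAt.div
      contDiff_snd.contDiffAt hp

lemma finiteModular_le_div_mul (hφ : ∀ t, IsOrliczFunction (φ t)) (F : Finset K)
    (g : ℓ∞(K)) {ρ σ : ℝ} (hρ : 0 < ρ) (hρσ : ρ ≤ σ) :
    finiteModular φ F (g, σ) ≤ ρ / σ * finiteModular φ F (g, ρ) := by
  have hσ : 0 < σ := hρ.trans_le hρσ
  rw [finiteModular, finiteModular, Finset.mul_sum]
  refine Finset.sum_le_sum fun t _ => ?_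
  calc φ t |g t / σ| = φ t (ρ / σ * |g t / ρ|) := by
        rw [abs_div, abs_div, abs_of_pos hρ, abs_of_pos hσ]
        field_simp
    _ ≤ ρ / σ * φ t |g t / ρ| :=
      (hφ t).map_mul_le (by positivity) (div_le_one_of_le₀ hρσ hσ.le) (abs_nonneg _)

lemma mem_orliczSet_iff_finiteModular_le (hφ : ∀ t, IsOrliczFunction (φ t)) {F : Finset K}
    {g : ℓ∞(K)} {ρ : ℝ} (hρ : 0 < ρ) (hF : ∀ t ∉ F, φ t |g t / ρ| = 0) :
    ρ ∈ orliczSet φ (fun t => g t) ↔ finiteModular φ F (g, ρ) ≤ 1 := by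
  have hterm : ∀ t, |g t| / ρ = |g t / ρ| := fun t => by rw [abs_div, abs_of_pos hρ]
  have hsum : ∑' t, ENNReal.ofReal (φ t (|g t| / ρ))
      = ENNReal.ofReal (finiteModular φ F (g, ρ)) := by
    rw [tsum_eq_sum (s := F) fun t ht => by rw [hterm, hF t ht, ENNReal.ofReal_zero],
      finiteModular, ENNReal.ofReal_sum_of_nonneg fun t _ => (hφ t).nonneg (abs_nonneg _)]
    simp only [hterm]
  simp only [orliczSet, mem_ofPred_eq, hρ, true_and, hsum, ENNReal.ofReal_le_one]

lemma finiteModular_eq_one_of_sInf_eq {n : WithTop ℕ∞} (hφ : ∀ t, IsOrliczFunction (φ t))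
    (hsmooth : ∀ t, ContDiff ℝ n (fun x : ℝ => φ t |x|)) {F : Finset K} {f : ℓ∞(K)} {c : ℝ}
    (hc : 0 < c) (hf : sInf (orliczSet φ (fun t => f t)) = c)
    (hF : ∀ᶠ ρ in 𝓝 c, ∀ t ∉ F, φ t |f t / ρ| = 0) : finiteModular φ F (f, c) = 1 := by
  have hne : (orliczSet φ (fun t => f t)).Nonempty := by
    by_contra h
    rw [not_nonempty_iff_eq_empty.mp h, Real.sInf_empty] at hf
    exact hc.ne hf
  have hcont : ContinuousAt (fun ρ => finiteModular φ F (f, ρ)) c :=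
    (contDiffAt_finiteModular hsmooth F (p := (f, c)) hc.ne').continuousAt.comp
      (continuous_const.prodMk continuous_id).continuousAt
  have hmem : ∀ᶠ ρ in 𝓝 c, 0 < ρ →
      (ρ ∈ orliczSet φ (fun t => f t) ↔ finiteModular φ F (f, ρ) ≤ 1) :=
    hF.mono fun ρ hρ hρ₀ => mem_orliczSet_iff_finiteModular_le hφ hρ₀ hρ
  apply le_antisymm
  · refine le_of_tendsto (hcont.mono_left (nhdsWithin_le_nhds (s := Ioi c))) ?_
    filter_upwards [eventually_nhdsWithin_of_eventually_nhds hmem, self_mem_nhdsWithin]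
      with ρ hρ (hcρ : c < ρ)
    obtain ⟨ρ', hρ', hρ'ρ⟩ := exists_lt_of_csInf_lt hne (hf ▸ hcρ)
    exact (hρ (hc.trans hcρ)).mp (mem_orliczSet_of_mem_of_le hφ hρ' hρ'ρ.le)
  · refine ge_of_tendsto (hcont.mono_left (nhdsWithin_le_nhds (s := Iio c))) ?_
    filter_upwards [eventually_nhdsWithin_of_eventually_nhds hmem, self_mem_nhdsWithin,
      eventually_nhdsWithin_of_eventually_nhds (lt_mem_nhds hc)] with ρ hρ (hρc : ρ < c) hρ₀
    by_contra! hlt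
    have := csInf_le ⟨0, fun _ h => h.1.le⟩ ((hρ hρ₀).mpr hlt.le)
    linarith

lemma isLeast_orliczSet_of_finiteModular_eq_one (hφ : ∀ t, IsOrliczFunction (φ t))
    {F : Finset K} {g : ℓ∞(K)} {σ : ℝ} (hσ : 0 < σ) (hg : finiteModular φ F (g, σ) = 1)
    (hF : ∀ᶠ ρ in 𝓝 σ, ∀ t ∉ F, φ t |g t / ρ| = 0) :
    IsLeast (orliczSet φ (fun t => g t)) σ := by
  refine ⟨(mem_orliczSet_iff_finiteModular_le hφ hσ hF.self_of_nhds).mpr hg.le, fun ρ hρ => ?_⟩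
  by_contra! hρσ
  obtain ⟨ρ', hρ'F, hρρ', hρ'σ⟩ :=
    ((eventually_nhdsWithin_of_eventually_nhds hF).and (Ioo_mem_nhdsLT hρσ)).exists
  have hρ'₀ : 0 < ρ' := hρ.1.trans hρρ'
  have hle : finiteModular φ F (g, ρ') ≤ 1 :=
    (mem_orliczSet_iff_finiteModular_le hφ hρ'₀ hρ'F).mp
      (mem_orliczSet_of_mem_of_le hφ hρ hρρ'.le)
  have hscale := finiteModular_le_div_mul hφ F g hρ'₀ hρ'σ.le
  have hratio : ρ' / σ < 1 := (div_lt_one hσ).mpr hρ'σ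
  rw [hg] at hscale
  nlinarith [div_pos hρ'₀ hσ]

lemma deriv_neg_of_finiteModular_eq_one (hφ : ∀ t, IsOrliczFunction (φ t)) {F : Finset K}
    {g : ℓ∞(K)} {c d : ℝ} (hc : 0 < c) (hg : finiteModular φ F (g, c) = 1)
    (hd : HasDerivAt (fun ρ => finiteModular φ F (g, ρ)) d c) : d < 0 := by
  have hslope : ∀ᶠ ρ in 𝓝[>] c, slope (fun ρ => finiteModular φ F (g, ρ)) c ρ ≤ -ρ⁻¹ := by
    filter_upwards [self_mem_nhdsWithin] with ρ (hcρ : c < ρ)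
    have hscale := finiteModular_le_div_mul hφ F g hc hcρ.le
    rw [hg, mul_one] at hscale
    rw [slope_def_field, hg, div_le_iff₀ (sub_pos.mpr hcρ)]
    calc finiteModular φ F (g, ρ) - 1 ≤ c / ρ - 1 := by linarith
      _ = -ρ⁻¹ * (ρ - c) := by field_simp [(hc.trans hcρ).ne']; ring
  have hlim : d ≤ -c⁻¹ :=
    le_of_tendsto_of_tendsto (hd.tendsto_slope.mono_left (nhdsGT_le_nhdsNE c))
      (((tendsto_inv₀ hc.ne').neg).mono_left nhdsWithin_le_nhds) hslope
  linarith [inv_pos.mpr hc]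

lemma eventually_forall_notMem_eq_zero (X : Submodule ℝ ℓ∞(K)) {f₀ : ℓ∞(K)} {c δ : ℝ}
    (hc : c ≠ 0) (hδ : 0 < δ) {F : Finset K}
    (hF : ∀ g ∈ X, ‖c⁻¹ • f₀ - g‖ < δ → ∀ t ∉ F, φ t |g t| = 0) :
    ∀ᶠ p in 𝓝 (f₀, c), p.1 ∈ X → ∀ t ∉ F, φ t |p.1 t / p.2| = 0 := by
  have hcont : ContinuousAt (fun p : ℓ∞(K) × ℝ => p.2⁻¹ • p.1) (f₀, c) :=
    (continuousAt_snd.inv₀ hc).smul continuousAt_fst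
  filter_upwards [hcont.eventually (Metric.ball_mem_nhds _ hδ)] with p hp hpX t ht
  rw [dist_comm, dist_eq_norm] at hp
  have := hF _ (X.smul_mem _ hpX) hp t ht
  rwa [lp.coeFn_smul, Pi.smul_apply, smul_eq_mul, inv_mul_eq_div] at this

lemma exists_contDiffAt_eventually_eq_sInf_orliczSet {n : WithTop ℕ∞} (hn : n ≠ 0)
    (hφ : ∀ t, IsOrliczFunction (φ t)) (hsmooth : ∀ t, ContDiff ℝ n (fun x : ℝ => φ t |x|))
    (X : Submodule ℝ ℓ∞(K)) {f₀ : ℓ∞(K)} (hf₀ : f₀ ∈ X) {c : ℝ} (hc : 0 < c)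
    (hf₀c : sInf (orliczSet φ (fun t => f₀ t)) = c) {F : Finset K}
    (hF : ∀ᶠ p in 𝓝 (f₀, c), p.1 ∈ X → ∀ t ∉ F, φ t |p.1 t / p.2| = 0) :
    ∃ G : ℓ∞(K) → ℝ, ContDiffAt ℝ n G f₀ ∧
      ∀ᶠ g in 𝓝 f₀, g ∈ X → sInf (orliczSet φ (fun t => g t)) = G g := by
  have hslice : ∀ᶠ p in 𝓝 (f₀, c), p.1 ∈ X → ∀ᶠ ρ in 𝓝 p.2, ∀ t ∉ F, φ t |p.1 t / ρ| = 0 := by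
    filter_upwards [eventually_eventually_nhds.mpr hF] with p hp hpX
    have hmk : Tendsto (fun ρ => (p.1, ρ)) (𝓝 p.2) (𝓝 p) :=
      (continuous_const.prodMk continuous_id).tendsto' _ _ rfl
    exact (hmk.eventually hp).mono fun ρ h => h hpX
  have hΨ := contDiffAt_finiteModular hsmooth F (p := (f₀, c)) hc.ne'
  have hΨ₀ : finiteModular φ F (f₀, c) = 1 :=
    finiteModular_eq_one_of_sInf_eq hφ hsmooth hc hf₀c (hslice.self_of_nhds hf₀)
  have hinv : (fderiv ℝ (finiteModular φ F) (f₀, c) ∘L .inr ℝ ℓ∞(K) ℝ).IsInvertible := by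
    refine ContinuousLinearMap.isInvertible_of_apply_one_ne_zero _ (ne_of_lt ?_)
    refine deriv_neg_of_finiteModular_eq_one hφ hc hΨ₀ ?_
    exact (hΨ.differentiableAt hn).hasFDerivAt.comp_hasDerivAt c
      ((hasDerivAt_const c f₀).prodMk (hasDerivAt_id c))
  set σ := hΨ.implicitFunction hn hinv
  have hσ : ContDiffAt ℝ n σ f₀ := hΨ.contDiffAt_implicitFunction hn hinv
  have hσc : σ f₀ = c := hΨ.implicitFunction_apply_self hn hinv
  have hgraph : Tendsto (fun g => (g, σ g)) (𝓝 f₀) (𝓝 (f₀, c)) := by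
    simpa [hσc] using (continuousAt_id.prodMk hσ.continuousAt).tendsto
  refine ⟨σ, hσ, ?_⟩
  filter_upwards [hgraph.eventually hslice, hΨ.eventually_apply_implicitFunction hn hinv,
    hσ.continuousAt.eventually (lt_mem_nhds (hσc ▸ hc))] with g hgF hgσ hσ₀ hgX
  rw [hΨ₀] at hgσ
  exact (isLeast_orliczSet_of_finiteModular_eq_one hφ hσ₀ hgσ (hgF hgX)).csInf_eq

end

theorem stmt_12 (K : Type*) (φ : K → ℝ → ℝ) (hφ : ∀ t, IsOrliczFunction (φ t))
    (hsmooth : ∀ t, ContDiff ℝ ((⊤ : ℕ∞) : WithTop ℕ∞) (fun x : ℝ => φ t |x|))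
    (R S : ℝ) (hR : 0 < R) (hRS : R < S)
    (hφR : ∀ t, φ t R = 0) (hφS : ∀ t, 1 ≤ φ t S)
    (X : Submodule ℝ (lp (fun _ : K => ℝ) ∞))
    (hloc : ∀ f ∈ X, sInf (orliczSet φ (fun t => f t)) = 1 →
      ∃ δ > (0 : ℝ), ∃ F : Finset K, ∀ g ∈ X, ‖f - g‖ < δ → ∀ t ∉ F, φ t |g t| = 0) :
    ContDiffOn ℝ ((⊤ : ℕ∞) : WithTop ℕ∞)
      (fun f : X => sInf (orliczSet φ (fun t => (f : lp (fun _ : K => ℝ) ∞) t)))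
      {f : X | f ≠ 0} := by
  intro f₀ hf₀
  set c := sInf (orliczSet φ (fun t => (f₀ : ℓ∞(K)) t))
  have hc : 0 < c := sInf_orliczSet_pos hφ hR hφR (hR.trans hRS) hφS (by simpa using hf₀)
  obtain ⟨δ, hδ, F, hF⟩ := hloc _ (X.smul_mem c⁻¹ f₀.2) <| by
    rw [sInf_orliczSet_smul _ (inv_pos.mpr hc), inv_mul_cancel₀ hc.ne']
  obtain ⟨G, hG, hGeq⟩ := exists_contDiffAt_eventually_eq_sInf_orliczSet (by simp) hφ hsmooth X
    f₀.2 hc rfl (eventually_forall_notMem_eq_zero X hc.ne' hδ hF)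
  refine ((hG.comp f₀ X.subtypeL.contDiff.contDiffAt).congr_of_eventuallyEq ?_).contDiffWithinAt
  filter_upwards [X.subtypeL.continuous.continuousAt.eventually hGeq] with f hf using hf f.2
end

section
/- Let K be a compact Hausdorff space, let (D_i)_{i∈ℕ} be pairwise disjoint subsets with K = ⋃_{i∈ℕ} D_i and D_i ∩ D_i' = ∅ for every i, and let r_i ∈ (0,1) be reals whose infinite product converges to a positive limit. Define α(t) = ∏{r_i : t ∈ closure(D_i)} and β(t) = ∏{r_i : t ∈ D_i'}. Let f ∈ C(K) satisfy |f(t)| < β(t) for all t ∈ K. Then there exist δ > 0 and a finite subset F of K such that for every g ∈ C(K) with ‖f − g‖∞ < δ and every t ∉ F one has |g(t)| < α(t). -/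
/-- `α(t) = ∏ { r_i : t ∈ closure (D i) }`. -/
noncomputable def alphaWeight {K : Type*} [TopologicalSpace K]
    (D : ℕ → Set K) (r : ℕ → ℝ) (t : K) : ℝ :=
  ∏' i : {i : ℕ // t ∈ closure (D i)}, r i.1

/-- `β(t) = ∏ { r_i : t ∈ (D i)' }`, where `(D i)'` is the derived set of `D i`. -/
noncomputable def betaWeight {K : Type*} [TopologicalSpace K]
    (D : ℕ → Set K) (r : ℕ → ℝ) (t : K) : ℝ :=
  ∏' i : {i : ℕ // t ∈ derivedSet (D i)}, r i.1

/-!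
With `L i = log (r i) ≤ 0` summable, `α` and `β` are exponentials of sums of `L` over index
sets. If `t₀ ∉ (D i)'`, a punctured neighbourhood of `t₀` misses `closure (D i)`; doing this for
the finitely many indices outside a tail of small sum gives `α t > β t₀ - ε` for `t ≠ t₀` near
`t₀`. With the continuity of `f`, every point has a punctured neighbourhood on which `α - |f|`
is bounded below by a positive constant; finitely many of these cover `K`, and their centres
form `F`.
-/

open Filter Topology

namespace Real

variable {ι : Type*} {r : ι → ℝ}

theorem summable_log_of_tprod_pos (h0 : ∀ i, 0 < r i) (h1 : ∀ i, r i ≤ 1)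
    (hmul : Multipliable r) (hpos : 0 < ∏' i, r i) : Summable fun i ↦ log (r i) := by
  have hpartial (s : Finset ι) : ∏' i, r i ≤ ∏ i ∈ s, r i :=
    (Finset.prod_anti_set_of_le_one (fun i ↦ (h0 i).le) h1).le_of_tendsto hmul.hasProd s
  have hneg : Summable fun i ↦ -log (r i) := by
    refine summable_of_sum_le (c := -log (∏' i, r i))
      (fun i ↦ neg_nonneg.2 (log_nonpos (h0 i).le (h1 i))) fun s ↦ ?_
    rw [Finset.sum_neg_distrib, ← log_prod fun i _ ↦ (h0 i).ne', neg_le_neg_iff]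
    exact log_le_log hpos (hpartial s)
  simpa using hneg.neg

theorem tprod_subtype_eq_exp_tsum_indicator (h0 : ∀ i, 0 < r i)
    (hlog : Summable fun i ↦ log (r i)) (s : Set ι) :
    ∏' i : s, r i = exp (∑' i, s.indicator (fun i ↦ log (r i)) i) := by
  rw [← tsum_subtype]
  exact (rexp_tsum_eq_tprod (f := fun i : s ↦ r i) (fun i ↦ h0 i) (hlog.subtype s)).symm

end Real

section NonposSums

variable {ι : Type*} {L : ι → ℝ}

theorem indicator_add_indicator_le_indicator_of_nonpos (hL : ∀ i, L i ≤ 0) {S A B : Set ι}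
    (h : S ⊆ A ∪ B) (i : ι) : A.indicator L i + B.indicator L i ≤ S.indicator L i := by
  have hLi := hL i
  have hmem := @h i
  simp only [Set.indicator, Set.mem_union] at hmem ⊢
  split_ifs <;> first | linarith | tauto

theorem Summable.exists_finset_lt_tsum_indicator_of_nonpos (hL : Summable L)
    (hL0 : ∀ i, L i ≤ 0) {A : Set ι} {c : ℝ} (hc : c < ∑' i, A.indicator L i) :
    ∃ s : Finset ι, ∀ S ⊆ A ∪ (s : Set ι)ᶜ, c < ∑' i, S.indicator L i := by
  have htail : ∀ᶠ s : Finset ι in atTop, c - ∑' i, A.indicator L i < ∑' i : {i // i ∉ s}, L i :=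
    (tendsto_tsum_compl_atTop_zero L).eventually (lt_mem_nhds (sub_neg.2 hc))
  obtain ⟨s, hs⟩ := htail.exists
  refine ⟨s, fun S hS ↦ ?_⟩
  have hcompl : ∑' i : {i // i ∉ s}, L i = ∑' i, (s : Set ι)ᶜ.indicator L i :=
    tsum_subtype (s : Set ι)ᶜ L
  calc c < ∑' i, A.indicator L i + ∑' i, (s : Set ι)ᶜ.indicator L i := by linarith
    _ = ∑' i, (A.indicator L i + (s : Set ι)ᶜ.indicator L i) :=
      ((hL.indicator A).tsum_add (hL.indicator _)).symm
    _ ≤ ∑' i, S.indicator L i :=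
      ((hL.indicator A).add (hL.indicator _)).tsum_le_tsum
        (indicator_add_indicator_le_indicator_of_nonpos hL0 hS) (hL.indicator S)

end NonposSums

theorem eventually_nhdsNE_notMem_closure_of_notMem_derivedSet {X : Type*} [TopologicalSpace X]
    [T1Space X] {A : Set X} {x : X} (h : x ∉ derivedSet A) :
    ∀ᶠ y in 𝓝[≠] x, y ∉ closure A := by
  rw [← derivedSet_closure, mem_derivedSet, accPt_iff_frequently_nhdsNE] at h
  exact not_frequently.1 h

theorem CompactSpace.exists_finset_forall_lt_of_eventually_nhdsNE {X : Type*}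
    [TopologicalSpace X] [CompactSpace X] {φ : X → ℝ}
    (h : ∀ x, ∃ c > 0, ∀ᶠ y in 𝓝[≠] x, c < φ y) :
    ∃ δ > 0, ∃ F : Finset X, ∀ y ∉ F, δ < φ y := by
  choose c hc hφ using h
  simp only [eventually_nhdsWithin_iff] at hφ
  obtain ⟨F, hF⟩ := CompactSpace.elim_nhds_subcover _ hφ
  obtain ⟨δ, hδc, hδ⟩ : ∃ δ, (∀ x ∈ F, δ < c x) ∧ 0 < δ :=
    ((F.eventually_all.2 fun x _ ↦ nhdsWithin_le_nhds (gt_mem_nhds (hc x))).and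
      self_mem_nhdsWithin).exists (f := 𝓝[>] (0 : ℝ))
  refine ⟨δ, hδ, F, fun y hy ↦ ?_⟩
  obtain ⟨x, hxF, hyx⟩ : ∃ x ∈ F, y ≠ x → c x < φ y := by
    simpa using hF.ge (Set.mem_univ y)
  exact (hδc x hxF).trans (hyx fun hxy ↦ hy (hxy ▸ hxF))

theorem eventually_nhdsNE_lt_alphaWeight {K : Type*} [TopologicalSpace K] [T1Space K]
    (D : ℕ → Set K) {r : ℕ → ℝ} (h0 : ∀ i, 0 < r i) (h1 : ∀ i, r i ≤ 1)
    (hmul : Multipliable r) (hpos : 0 < ∏' i, r i) {t₀ : K} {b : ℝ}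
    (hb : b < betaWeight D r t₀) : ∀ᶠ t in 𝓝[≠] t₀, b < alphaWeight D r t := by
  have hlog := Real.summable_log_of_tprod_pos h0 h1 hmul hpos
  have hweight (p : ℕ → Prop) : ∏' i : {i // p i}, r i =
      Real.exp (∑' i, {i | p i}.indicator (fun i ↦ Real.log (r i)) i) :=
    Real.tprod_subtype_eq_exp_tsum_indicator h0 hlog {i | p i}
  rcases le_or_gt b 0 with hb0 | hb0
  · exact Eventually.of_forall fun t ↦
      hb0.trans_lt (by rw [alphaWeight, hweight]; exact Real.exp_pos _)
  rw [betaWeight, hweight, ← Real.log_lt_iff_lt_exp hb0] at hb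
  obtain ⟨s, hs⟩ := hlog.exists_finset_lt_tsum_indicator_of_nonpos
    (fun i ↦ Real.log_nonpos (h0 i).le (h1 i)) hb
  have hfar : ∀ᶠ t in 𝓝[≠] t₀, ∀ i ∈ s, t₀ ∉ derivedSet (D i) → t ∉ closure (D i) :=
    s.eventually_all.2 fun i _ ↦ by
      by_cases hi : t₀ ∈ derivedSet (D i)
      · exact Eventually.of_forall fun _ h ↦ absurd hi h
      · exact (eventually_nhdsNE_notMem_closure_of_notMem_derivedSet hi).mono fun _ h _ ↦ h
  filter_upwards [hfar] with t ht
  rw [alphaWeight, hweight, ← Real.log_lt_iff_lt_exp hb0]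
  exact hs _ fun i hi ↦ or_iff_not_imp_right.2 fun his ↦
    by_contra fun hi₀ ↦ ht i (not_not.1 his) hi₀ hi

theorem stmt_15_general (K : Type*) [TopologicalSpace K] [CompactSpace K] [T2Space K]
    (D : ℕ → Set K)
    (r : ℕ → ℝ) (hr : ∀ i, r i ∈ Set.Ioo (0 : ℝ) 1)
    (hmul : Multipliable r) (hpos : 0 < ∏' i, r i)
    (f : C(K, ℝ)) (hf : ∀ t, |f t| < betaWeight D r t) :
    ∃ δ > (0 : ℝ), ∃ F : Finset K, ∀ g : C(K, ℝ), ‖f - g‖ < δ →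
      ∀ t ∉ F, |g t| < alphaWeight D r t := by
  have hgap (t₀ : K) : ∃ c > 0, ∀ᶠ t in 𝓝[≠] t₀, c < alphaWeight D r t - |f t| := by
    obtain ⟨a, hfa, hab⟩ := exists_between (hf t₀)
    obtain ⟨b, hab, hb⟩ := exists_between hab
    have hf_near : ∀ᶠ t in 𝓝[≠] t₀, |f t| < a :=
      nhdsWithin_le_nhds ((continuous_abs.comp f.continuous).tendsto t₀ |>.eventually
        (gt_mem_nhds hfa))
    refine ⟨b - a, sub_pos.2 hab, ?_⟩
    filter_upwards [hf_near, eventually_nhdsNE_lt_alphaWeight D (fun i ↦ (hr i).1)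
      (fun i ↦ (hr i).2.le) hmul hpos hb] with t hft hbt
    linarith
  obtain ⟨δ, hδ, F, hF⟩ := CompactSpace.exists_finset_forall_lt_of_eventually_nhdsNE hgap
  refine ⟨δ, hδ, F, fun g hg t ht ↦ ?_⟩
  have hgf : |g t| - |f t| ≤ ‖f - g‖ := calc
    |g t| - |f t| ≤ |f t - g t| := (abs_sub_abs_le_abs_sub _ _).trans_eq (abs_sub_comm _ _)
    _ ≤ ‖f - g‖ := (f - g).norm_coe_le_norm t
  linarith [hF t ht]

theorem stmt_15 (K : Type*) [TopologicalSpace K] [CompactSpace K] [T2Space K]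
    (D : ℕ → Set K)
    (hdisj : Pairwise (Function.onFun Disjoint D))
    (hcover : ⋃ i, D i = Set.univ)
    (hdiscr : ∀ i, D i ∩ derivedSet (D i) = ∅)
    (r : ℕ → ℝ) (hr : ∀ i, r i ∈ Set.Ioo (0 : ℝ) 1)
    (hmul : Multipliable r) (hpos : 0 < ∏' i, r i)
    (f : C(K, ℝ)) (hf : ∀ t, |f t| < betaWeight D r t) :
    ∃ δ > (0 : ℝ), ∃ F : Finset K, ∀ g : C(K, ℝ), ‖f - g‖ < δ →
      ∀ t ∉ F, |g t| < alphaWeight D r t :=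
  stmt_15_general K D r hr hmul hpos f hf
end
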